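/- arXiv:2506.05067 — 2 statements merged into one kernel-verified Lean document; each statement's English description precedes it below -/
import Mathlib

section
/- For all natural numbers a ≥ 2, b ≥ 2, and k ≥ 1, a ↑^(k+1) b ≥ a ↑^k b; that is, the hyperoperation value is monotone (non-decreasing) in the number of arrows k for fixed base a ≥ 2 and argument b ≥ 2. -/
lemma hyper_lt_aux (n : ℕ) : ∀ a b : ℕ, 2 ≤ a → 1 ≤ b →
    b + 1 ≤ hyperoperation (n + 2) a b := by
  induction n with
  | zero =>
    intro a b ha hb
    rw [hyperoperation_two]
    calc b + 1 ≤ b + b := by omega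
    _ = 2 * b := by ring
    _ ≤ a * b := Nat.mul_le_mul_right b ha
  | succ n ih =>
    intro a b ha hb
    induction b with
    | zero => omega
    | succ b ihb =>
      rcases Nat.eq_zero_or_pos b with h | h
      · subst h
        rw [show n + 1 + 2 = n + 3 by ring, hyperoperation_ge_two_eq_self]
        omega
      · have h1 := ihb h
        rw [show n + 1 + 2 = (n + 2) + 1 by ring] at h1 ⊢
        rw [hyperoperation_recursion]
        have h2 := ih a (hyperoperation (n + 2 + 1) a b) ha (by omega)
        omega

lemma hyper_pos (n : ℕ) (a : ℕ) (ha : 2 ≤ a) (b : ℕ) :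
    1 ≤ hyperoperation (n + 3) a b := by
  rcases Nat.eq_zero_or_pos b with h | h
  · subst h
    rw [hyperoperation_ge_three_eq_one]
  · have := hyper_lt_aux (n + 1) a b ha h
    rw [show n + 1 + 2 = n + 3 by ring] at this
    omega

lemma hyper_mono (n : ℕ) (a : ℕ) (ha : 2 ≤ a) :
    Monotone (hyperoperation (n + 2) a) := by
  cases n with
  | zero =>
    intro x y h
    rw [hyperoperation_two, hyperoperation_two]
    exact Nat.mul_le_mul_left a h
  | succ n =>
    apply monotone_nat_of_le_succ
    intro b
    rw [show n + 1 + 2 = (n + 2) + 1 by ring, hyperoperation_recursion]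
    have h1 : 1 ≤ hyperoperation (n + 1 + 2) a b := by
      rw [show n + 1 + 2 = n + 3 by ring]; exact hyper_pos n a ha b
    have h2 := hyper_lt_aux n a (hyperoperation (n + 2 + 1) a b) ha
      (by rw [show n + 2 + 1 = n + 1 + 2 by ring]; exact h1)
    rw [show n + 2 + 1 = n + 1 + 2 by ring] at h2 ⊢
    omega

lemma hyper_level_mono : ∀ n a b : ℕ, 2 ≤ a → 2 ≤ b →
    hyperoperation (n + 1) a b ≤ hyperoperation (n + 2) a b := by
  intro n
  induction n with
  | zero =>
    intro a b ha hb
    rw [hyperoperation_one, hyperoperation_two]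
    nlinarith
  | succ n ih =>
    intro a b ha hb
    induction b with
    | zero => omega
    | succ b ihb =>
      rcases Nat.lt_or_ge b 2 with h | h
      · have hb1 : b = 1 := by omega
        subst hb1
        have e1 : hyperoperation (n + 1 + 1) a (1 + 1) = hyperoperation (n + 1) a a := by
          rw [hyperoperation_recursion, show n + 1 + 1 = n + 2 by ring,
            hyperoperation_ge_two_eq_self]
        have e2 : hyperoperation (n + 1 + 2) a (1 + 1) = hyperoperation (n + 2) a a := by
          rw [show n + 1 + 2 = (n + 2) + 1 by ring, hyperoperation_recursion,
            hyperoperation_ge_two_eq_self]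
        rw [e1, e2]
        exact ih a a ha ha
      · have h1 := ihb (by omega)
        rw [show n + 1 + 2 = (n + 2) + 1 by ring, hyperoperation_recursion,
          show n + 1 + 1 = (n + 1) + 1 by ring, hyperoperation_recursion,
          show n + 1 + 1 = n + 2 by ring] at *
        calc hyperoperation (n + 1) a (hyperoperation (n + 1 + 1) a b)
            ≤ hyperoperation (n + 2) a (hyperoperation (n + 1 + 1) a b) := by
              apply ih a _ ha
              have := hyper_lt_aux n a b ha (by omega)
              rw [show n + 2 = n + 1 + 1 by ring] at this
              omega
          _ ≤ hyperoperation (n + 2) a (hyperoperation (n + 2 + 1) a b) := by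
              apply hyper_mono n a ha
              rw [show n + 2 + 1 = n + 1 + 2 by ring,
                show n + 1 + 1 = n + 2 by ring] at *
              exact h1

theorem arrow_mono_arrows (a b k : ℕ) (ha : 2 ≤ a) (hb : 2 ≤ b) (hk : 1 ≤ k) :
    hyperoperation (k + 1 + 2) a b ≥ hyperoperation (k + 2) a b := by
  have := hyper_level_mono (k + 1) a b ha hb
  rw [show k + 1 + 1 = k + 2 by ring] at this
  exact this
end

section
/- For all natural numbers a ≥ 3, b ≥ 2, and k ≥ 1, a ↑^(k+1) b > a ↑^k b; that is, the map k ↦ a ↑^k b is strictly increasing for fixed a ≥ 3, b ≥ 2. -/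
lemma hyper_gt_self (n a : ℕ) (ha : 2 ≤ a) : ∀ b, 1 ≤ b → b < hyperoperation (n + 2) a b := by
  induction n with
  | zero =>
    intro b hb
    rw [hyperoperation_two]
    calc b = 1 * b := (one_mul b).symm
    _ < a * b := (Nat.mul_lt_mul_right hb).mpr (by omega)
  | succ n ih =>
    intro b hb
    induction b with
    | zero => omega
    | succ b ihb =>
      rcases Nat.eq_zero_or_pos b with h | h
      · subst h
        have h1 : hyperoperation (n + 1 + 2) a 1 = a := hyperoperation_ge_two_eq_self (n + 1) a
        simpa using h1.symm ▸ (by omega : (1:ℕ) < a)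
      · have h1 := ihb h
        have h2 := ih (hyperoperation (n + 1 + 2) a b) (by omega)
        have h3 : hyperoperation (n + 1 + 2) a (b + 1)
            = hyperoperation (n + 2) a (hyperoperation (n + 1 + 2) a b) :=
          hyperoperation_recursion (n + 2) a b
        omega

lemma hyper_strictMono (n a : ℕ) (ha : 2 ≤ a) : StrictMono (hyperoperation (n + 2) a) := by
  apply strictMono_nat_of_lt_succ
  intro b
  cases n with
  | zero =>
    rw [hyperoperation_two]
    show a * b < hyperoperation 2 a (b + 1)
    rw [hyperoperation_two]
    show a * b < a * (b + 1)
    rw [Nat.mul_succ]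
    omega
  | succ n =>
    have hrec : hyperoperation (n + 1 + 2) a (b + 1)
        = hyperoperation (n + 2) a (hyperoperation (n + 1 + 2) a b) :=
      hyperoperation_recursion (n + 2) a b
    rcases Nat.eq_zero_or_pos b with h | h
    · subst h
      have h0 : hyperoperation (n + 1 + 2) a 0 = 1 := hyperoperation_ge_three_eq_one n a
      have h1 := hyper_gt_self n a ha 1 le_rfl
      simp only [Nat.zero_add] at *
      rw [h0] at hrec
      omega
    · have h1 := hyper_gt_self (n + 1) a ha b h
      have h2 := hyper_gt_self n a ha (hyperoperation (n + 1 + 2) a b) (by omega)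
      omega

theorem arrow_strict_mono_arrows (a b k : ℕ) (ha : 3 ≤ a) (hb : 2 ≤ b) (hk : 1 ≤ k) :
    hyperoperation (k + 1 + 2) a b > hyperoperation (k + 2) a b := by
  have ha2 : 2 ≤ a := by omega
  induction b with
  | zero => omega
  | succ b ihb =>
    have hrec : hyperoperation (k + 1 + 2) a (b + 1)
        = hyperoperation (k + 2) a (hyperoperation (k + 1 + 2) a b) :=
      hyperoperation_recursion (k + 2) a b
    rcases Nat.eq_or_lt_of_le hb with h | h
    · have hb1 : b = 1 := by omega
      subst hb1
      have h1 : hyperoperation (k + 1 + 2) a 1 = a := hyperoperation_ge_two_eq_self (k + 1) a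
      rw [hrec, h1]
      exact hyper_strictMono k a ha2 (by omega : 2 < a)
    · have hb1 : 2 ≤ b := by omega
      have ih := ihb hb1
      rw [hrec]
      have h2 : hyperoperation (k + 2) a (b + 1) ≤ hyperoperation (k + 2) a (hyperoperation (k + 2) a b) := by
        apply (hyper_strictMono k a ha2).monotone
        have := hyper_gt_self k a ha2 b (by omega)
        omega
      have h3 : hyperoperation (k + 2) a (hyperoperation (k + 2) a b)
          < hyperoperation (k + 2) a (hyperoperation (k + 1 + 2) a b) :=
        hyper_strictMono k a ha2 ih
      omega
end
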